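/- (Soft core inclusion in the zero-temperature limit) Let P be a probabilistic tournament on n agents satisfying the margin assumption with margin δ > 0, and let the path-length parameter satisfy K ≥ n − 1. Then for every agent a, the zero-temperature limits of the soft scores satisfy lim_{τ→0⁺} u_τ(a) ≤ lim_{τ→0⁺} t_τ(a) (both limits exist). -/

import Mathlib

open Filter Topology

/-- The logistic sigmoid. -/
noncomputable def sigmoid (z : ℝ) : ℝ := 1 / (1 + Real.exp (-z))

/-- Soft majority edge matrix `D_τ`. -/
noncomputable def softEdge {n : ℕ} (P : Matrix (Fin n) (Fin n) ℝ) (τ : ℝ) :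
    Matrix (Fin n) (Fin n) ℝ := fun a b => sigmoid ((P a b - 1/2) / τ)

/-- 0/1 adjacency matrix of the hard majority tournament. -/
noncomputable def hardAdj {n : ℕ} (P : Matrix (Fin n) (Fin n) ℝ) : Matrix (Fin n) (Fin n) ℝ :=
  fun a b => if 1/2 < P a b then 1 else 0

/-- Soft reachability matrix `R_τ = Σ_{k=1}^K D_τ^k`. -/
noncomputable def softReach {n : ℕ} (P : Matrix (Fin n) (Fin n) ℝ) (τ : ℝ) (K : ℕ) :
    Matrix (Fin n) (Fin n) ℝ := ∑ k ∈ Finset.Icc 1 K, softEdge P τ ^ k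

/-- softmin over a finite family. -/
noncomputable def softmin {ι : Type*} (τ : ℝ) (s : Finset ι) (f : ι → ℝ) : ℝ :=
  -τ * Real.log (∑ i ∈ s, Real.exp (-(f i) / τ))

/-- scalar soft maximum over a finite family. -/
noncomputable def smax {ι : Type*} (τ : ℝ) (s : Finset ι) (f : ι → ℝ) : ℝ :=
  τ * Real.log (∑ i ∈ s, Real.exp (f i / τ))

/-- Soft Top-Cycle membership score `t_τ(a)`. -/
noncomputable def tcScore {n : ℕ} (P : Matrix (Fin n) (Fin n) ℝ) (τ : ℝ) (K : ℕ) (a : Fin n) : ℝ :=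
  softmin τ ({a}ᶜ : Finset (Fin n)) (fun b => softReach P τ K a b)

/-- Soft cover score `cover_τ(c, a)`. -/
noncomputable def coverScore {n : ℕ} (P : Matrix (Fin n) (Fin n) ℝ) (τ : ℝ) (c a : Fin n) : ℝ :=
  softEdge P τ c a *
    (1 - smax τ (Finset.univ : Finset (Fin n)) (fun b => softEdge P τ a b - softEdge P τ c b))

/-- Soft Uncovered-Set membership score `u_τ(a)`. -/
noncomputable def ucScore {n : ℕ} (P : Matrix (Fin n) (Fin n) ℝ) (τ : ℝ) (a : Fin n) : ℝ :=
  1 - smax τ ({a}ᶜ : Finset (Fin n)) (fun c => coverScore P τ c a)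

/-- `a ≻ b` in the hard majority tournament. -/
def beats {n : ℕ} (P : Matrix (Fin n) (Fin n) ℝ) (a b : Fin n) : Prop := 1/2 < P a b

/-- `a` reaches `b` via a directed path in the hard majority tournament. -/
def reaches {n : ℕ} (P : Matrix (Fin n) (Fin n) ℝ) : Fin n → Fin n → Prop :=
  Relation.TransGen (beats P)

/-- `c` covers `a` in the hard majority tournament. -/
def covers {n : ℕ} (P : Matrix (Fin n) (Fin n) ℝ) (c a : Fin n) : Prop :=
  beats P c a ∧ ∀ b, beats P a b → beats P c b

/-- membership in the Top Cycle of the hard majority tournament. -/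
def inTopCycle {n : ℕ} (P : Matrix (Fin n) (Fin n) ℝ) (a : Fin n) : Prop :=
  ∀ b, b ≠ a → reaches P a b

/-- membership in the Uncovered Set of the hard majority tournament. -/
def inUncovered {n : ℕ} (P : Matrix (Fin n) (Fin n) ℝ) (a : Fin n) : Prop :=
  ∀ c, c ≠ a → ¬ covers P c a

/-- `P` is a probabilistic tournament. -/
def IsProbTournament {n : ℕ} (P : Matrix (Fin n) (Fin n) ℝ) : Prop :=
  (∀ a b, 0 ≤ P a b ∧ P a b ≤ 1) ∧ (∀ a b, P a b + P b a = 1) ∧ ∀ a, P a a = 1/2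

/-- margin assumption with margin `δ`. -/
def HasMargin {n : ℕ} (P : Matrix (Fin n) (Fin n) ℝ) (δ : ℝ) : Prop :=
  ∀ a b, a ≠ b → δ ≤ |P a b - 1/2|


open Finset

/-!
As `τ → 0⁺`, `σ(z/τ)` tends to the Heaviside step `H(z)` (with `H(0) = 1/2`), so `D_τ` tends
entrywise to the majority matrix `E(a,b) = H(P_{ab} - 1/2)`, while `smax_τ` and `softmin_τ` tend to
`max` and `min` because they lie within `τ log m` of them. Hence both limits exist, with
`lim t_τ(a) = min_{b ≠ a} Σ_{k=1}^K E^k(a,b)`.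

If some `c` covers `a`, then `E(c,a) = 1` and `E(a,b) ≤ E(c,b)` for every `b`, so the limiting
cover score of `c` is at least `1` and `lim u_τ(a) ≤ 0 ≤ lim t_τ(a)`. Otherwise `a` is a king of the
majority tournament: every `c ≠ a` is beaten by `a` or by some `b` that `a` beats, so
`Σ_k E^k(a,c) ≥ 1` and `lim u_τ(a) ≤ 1 ≤ lim t_τ(a)`.
-/

section SoftMax

variable {ι : Type*} {s : Finset ι} {τ : ℝ}

lemma sup'_le_smax (hτ : 0 < τ) (hs : s.Nonempty) (f : ι → ℝ) : s.sup' hs f ≤ smax τ s f := by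
  obtain ⟨i, hi, hsup⟩ := exists_mem_eq_sup' hs f
  rw [hsup, smax, ← div_le_iff₀' hτ,
    Real.le_log_iff_exp_le (sum_pos (fun j _ => Real.exp_pos _) hs)]
  exact single_le_sum (f := fun j => Real.exp (f j / τ)) (fun j _ => (Real.exp_pos _).le) hi

lemma smax_le_sup'_add (hτ : 0 < τ) (hs : s.Nonempty) (f : ι → ℝ) :
    smax τ s f ≤ s.sup' hs f + τ * Real.log s.card := by
  have hsum : ∑ i ∈ s, Real.exp (f i / τ) ≤ s.card * Real.exp (s.sup' hs f / τ) := by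
    rw [← nsmul_eq_mul, ← sum_const]
    exact sum_le_sum fun i hi =>
      Real.exp_le_exp.2 (div_le_div_of_nonneg_right (le_sup' f hi) hτ.le)
  have hcard : (0 : ℝ) < s.card := by exact_mod_cast hs.card_pos
  calc smax τ s f ≤ τ * Real.log (s.card * Real.exp (s.sup' hs f / τ)) :=
        mul_le_mul_of_nonneg_left
          (Real.log_le_log (sum_pos (fun i _ => Real.exp_pos _) hs) hsum) hτ.le
    _ = s.sup' hs f + τ * Real.log s.card := by
        rw [Real.log_mul hcard.ne' (Real.exp_pos _).ne', Real.log_exp]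
        field_simp
        ring

lemma tendsto_smax (hs : s.Nonempty) {g : ℝ → ι → ℝ} {L : ι → ℝ}
    (hg : ∀ i ∈ s, Tendsto (fun τ => g τ i) (𝓝[>] 0) (𝓝 (L i))) :
    Tendsto (fun τ => smax τ s (g τ)) (𝓝[>] 0) (𝓝 (s.sup' hs L)) := by
  have hsup : Tendsto (fun τ => s.sup' hs (g τ)) (𝓝[>] 0) (𝓝 (s.sup' hs L)) :=
    Tendsto.finset_sup'_nhds_apply hs hg
  have hlog : Tendsto (fun τ : ℝ => τ * Real.log s.card) (𝓝[>] 0) (𝓝 0) := by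
    have h0 : Tendsto (fun τ : ℝ => τ * Real.log s.card) (𝓝 0) (𝓝 (0 * Real.log s.card)) :=
      tendsto_id.mul_const _
    simpa using h0.mono_left nhdsWithin_le_nhds
  refine tendsto_of_tendsto_of_tendsto_of_le_of_le' hsup (by simpa using hsup.add hlog) ?_ ?_
  · filter_upwards [self_mem_nhdsWithin] with τ hτ using sup'_le_smax hτ hs (g τ)
  · filter_upwards [self_mem_nhdsWithin] with τ hτ using smax_le_sup'_add hτ hs (g τ)

lemma softmin_eq_neg_smax_neg (τ : ℝ) (s : Finset ι) (f : ι → ℝ) :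
    softmin τ s f = -smax τ s (fun i => -f i) := by
  simp only [softmin, smax, neg_mul, neg_div]

lemma inf'_eq_neg_sup'_neg (hs : s.Nonempty) (f : ι → ℝ) :
    s.inf' hs f = -s.sup' hs (fun i => -f i) := by
  refine le_antisymm ?_ (le_inf' _ _ fun j hj => ?_)
  · rw [le_neg]
    exact sup'_le _ _ fun j hj => neg_le_neg (inf'_le f hj)
  · rw [neg_le]
    exact le_sup' (fun j => -f j) hj

lemma tendsto_softmin (hs : s.Nonempty) {g : ℝ → ι → ℝ} {L : ι → ℝ}
    (hg : ∀ i ∈ s, Tendsto (fun τ => g τ i) (𝓝[>] 0) (𝓝 (L i))) :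
    Tendsto (fun τ => softmin τ s (g τ)) (𝓝[>] 0) (𝓝 (s.inf' hs L)) := by
  simp only [softmin_eq_neg_smax_neg, inf'_eq_neg_sup'_neg hs]
  exact (tendsto_smax hs fun i hi => (hg i hi).neg).neg

end SoftMax

noncomputable def heaviside (z : ℝ) : ℝ := if 0 < z then 1 else if z < 0 then 0 else 1/2

lemma heaviside_nonneg (z : ℝ) : 0 ≤ heaviside z := by
  unfold heaviside; split_ifs <;> norm_num

lemma heaviside_le_one (z : ℝ) : heaviside z ≤ 1 := by
  unfold heaviside; split_ifs <;> norm_num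

lemma heaviside_of_pos {z : ℝ} (hz : 0 < z) : heaviside z = 1 := if_pos hz

lemma heaviside_of_neg {z : ℝ} (hz : z < 0) : heaviside z = 0 := by
  rw [heaviside, if_neg hz.not_gt, if_pos hz]

lemma sigmoid_eq_real_sigmoid : sigmoid = Real.sigmoid := by
  funext z
  rw [sigmoid, Real.sigmoid_def, one_div]

lemma tendsto_sigmoid_div_nhdsGT_zero (z : ℝ) :
    Tendsto (fun τ => sigmoid (z / τ)) (𝓝[>] 0) (𝓝 (heaviside z)) := by
  simp only [sigmoid_eq_real_sigmoid, div_eq_mul_inv]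
  rcases lt_trichotomy z 0 with hz | rfl | hz
  · rw [heaviside_of_neg hz]
    exact Real.tendsto_sigmoid_atBot.comp (tendsto_inv_nhdsGT_zero.const_mul_atTop_of_neg hz)
  · simp [heaviside, Real.sigmoid_zero]
  · rw [heaviside_of_pos hz]
    exact Real.tendsto_sigmoid_atTop.comp (tendsto_inv_nhdsGT_zero.const_mul_atTop hz)

section ZeroTemperature

variable {n : ℕ} (P : Matrix (Fin n) (Fin n) ℝ)

noncomputable def zeroTempEdge : Matrix (Fin n) (Fin n) ℝ := fun a b => heaviside (P a b - 1/2)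

noncomputable def zeroTempReach (K : ℕ) : Matrix (Fin n) (Fin n) ℝ :=
  ∑ k ∈ Icc 1 K, zeroTempEdge P ^ k

noncomputable def zeroTempCover (c a : Fin n) : ℝ :=
  zeroTempEdge P c a *
    (1 - univ.sup' ⟨c, mem_univ c⟩ fun b => zeroTempEdge P a b - zeroTempEdge P c b)

lemma tendsto_softEdge (a b : Fin n) :
    Tendsto (fun τ => softEdge P τ a b) (𝓝[>] 0) (𝓝 (zeroTempEdge P a b)) :=
  tendsto_sigmoid_div_nhdsGT_zero _

lemma tendsto_softEdge_pow (k : ℕ) (a b : Fin n) :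
    Tendsto (fun τ => (softEdge P τ ^ k) a b) (𝓝[>] 0) (𝓝 ((zeroTempEdge P ^ k) a b)) := by
  induction k generalizing b with
  | zero => exact tendsto_const_nhds
  | succ k ih =>
    simp only [pow_succ, Matrix.mul_apply]
    exact tendsto_finsetSum _ fun c _ => (ih c).mul (tendsto_softEdge P c b)

lemma tendsto_softReach (K : ℕ) (a b : Fin n) :
    Tendsto (fun τ => softReach P τ K a b) (𝓝[>] 0) (𝓝 (zeroTempReach P K a b)) := by
  simp only [softReach, zeroTempReach, Matrix.sum_apply]
  exact tendsto_finsetSum _ fun k _ => tendsto_softEdge_pow P k a b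

lemma tendsto_coverScore (c a : Fin n) :
    Tendsto (fun τ => coverScore P τ c a) (𝓝[>] 0) (𝓝 (zeroTempCover P c a)) :=
  (tendsto_softEdge P c a).mul <| tendsto_const_nhds.sub <| tendsto_smax _ fun b _ =>
    (tendsto_softEdge P a b).sub (tendsto_softEdge P c b)

lemma tendsto_ucScore {a : Fin n} (hs : ({a}ᶜ : Finset (Fin n)).Nonempty) :
    Tendsto (fun τ => ucScore P τ a) (𝓝[>] 0)
      (𝓝 (1 - ({a}ᶜ : Finset (Fin n)).sup' hs (zeroTempCover P · a))) :=
  tendsto_const_nhds.sub <| tendsto_smax hs fun c _ => tendsto_coverScore P c a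

lemma tendsto_tcScore (K : ℕ) {a : Fin n} (hs : ({a}ᶜ : Finset (Fin n)).Nonempty) :
    Tendsto (fun τ => tcScore P τ K a) (𝓝[>] 0)
      (𝓝 (({a}ᶜ : Finset (Fin n)).inf' hs (zeroTempReach P K a))) :=
  tendsto_softmin hs fun b _ => tendsto_softReach P K a b

end ZeroTemperature

section Tournament

variable {n : ℕ} {P : Matrix (Fin n) (Fin n) ℝ} {δ : ℝ}

lemma not_beats_self (hP : IsProbTournament P) (a : Fin n) : ¬ beats P a a := by
  simp [beats, hP.2.2 a]

lemma lt_half_of_not_beats (hδ : 0 < δ) (hm : HasMargin P δ) {a b : Fin n} (hab : a ≠ b)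
    (h : ¬ beats P a b) : P a b < 1/2 := by
  have hmargin := hm a b hab
  rw [beats, not_lt] at h
  rw [abs_of_nonpos (by linarith)] at hmargin
  linarith

lemma beats_of_not_beats (hP : IsProbTournament P) (hδ : 0 < δ) (hm : HasMargin P δ)
    {a b : Fin n} (hab : a ≠ b) (h : ¬ beats P a b) : beats P b a := by
  have hlt := lt_half_of_not_beats hδ hm hab h
  have hsum := hP.2.1 a b
  rw [beats]
  linarith

lemma exists_beats_beats_of_inUncovered (hP : IsProbTournament P) (hδ : 0 < δ)
    (hm : HasMargin P δ) {a c : Fin n} (ha : inUncovered P a) (hca : c ≠ a)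
    (hac : ¬ beats P a c) : ∃ b, beats P a b ∧ beats P b c := by
  have hca' : beats P c a := beats_of_not_beats hP hδ hm hca.symm hac
  obtain ⟨b, hab, hcb⟩ : ∃ b, beats P a b ∧ ¬ beats P c b := by
    simpa [covers, hca'] using ha c hca
  refine ⟨b, hab, beats_of_not_beats hP hδ hm ?_ hcb⟩
  rintro rfl
  exact hac hab

lemma zeroTempEdge_of_beats {a b : Fin n} (h : beats P a b) : zeroTempEdge P a b = 1 :=
  heaviside_of_pos (sub_pos.2 h)

lemma zeroTempEdge_nonneg (a b : Fin n) : 0 ≤ zeroTempEdge P a b := heaviside_nonneg _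

lemma zeroTempEdge_le_one (a b : Fin n) : zeroTempEdge P a b ≤ 1 := heaviside_le_one _

lemma zeroTempReach_nonneg (K : ℕ) (a b : Fin n) : 0 ≤ zeroTempReach P K a b := by
  rw [zeroTempReach, Matrix.sum_apply]
  exact sum_nonneg fun k _ => Matrix.pow_apply_nonneg zeroTempEdge_nonneg k a b

lemma pow_apply_le_zeroTempReach {K k : ℕ} (hk : k ∈ Icc 1 K) (a b : Fin n) :
    (zeroTempEdge P ^ k) a b ≤ zeroTempReach P K a b := by
  rw [zeroTempReach, Matrix.sum_apply]
  exact single_le_sum (f := fun k => (zeroTempEdge P ^ k) a b)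
    (fun k _ => Matrix.pow_apply_nonneg zeroTempEdge_nonneg k a b) hk

lemma one_le_zeroTempReach_of_beats {K : ℕ} (hK : 1 ≤ K) {a b : Fin n} (hab : beats P a b) :
    1 ≤ zeroTempReach P K a b := by
  have hle := pow_apply_le_zeroTempReach (P := P) (mem_Icc.2 ⟨le_rfl, hK⟩) a b
  rwa [pow_one, zeroTempEdge_of_beats hab] at hle

lemma one_le_zeroTempReach_of_beats_beats {K : ℕ} (hK : 2 ≤ K) {a b c : Fin n}
    (hab : beats P a b) (hbc : beats P b c) : 1 ≤ zeroTempReach P K a c := by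
  calc (1 : ℝ) = zeroTempEdge P a b * zeroTempEdge P b c := by
        rw [zeroTempEdge_of_beats hab, zeroTempEdge_of_beats hbc, one_mul]
    _ ≤ ∑ x, zeroTempEdge P a x * zeroTempEdge P x c :=
        single_le_sum (f := fun x => zeroTempEdge P a x * zeroTempEdge P x c)
          (fun x _ => mul_nonneg (zeroTempEdge_nonneg a x) (zeroTempEdge_nonneg x c)) (mem_univ b)
    _ = (zeroTempEdge P ^ 2) a c := by rw [sq, Matrix.mul_apply]
    _ ≤ zeroTempReach P K a c := pow_apply_le_zeroTempReach (mem_Icc.2 ⟨by norm_num, hK⟩) a c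

lemma one_le_zeroTempReach_of_inUncovered (hP : IsProbTournament P) (hδ : 0 < δ)
    (hm : HasMargin P δ) {K : ℕ} (hK : n - 1 ≤ K) {a c : Fin n} (ha : inUncovered P a)
    (hca : c ≠ a) : 1 ≤ zeroTempReach P K a c := by
  have hca' : (c : ℕ) ≠ a := Fin.val_ne_of_ne hca
  have := a.isLt
  have := c.isLt
  by_cases hac : beats P a c
  · exact one_le_zeroTempReach_of_beats (by omega) hac
  · obtain ⟨b, hab, hbc⟩ := exists_beats_beats_of_inUncovered hP hδ hm ha hca hac
    -- `a`, `b`, `c` are distinct, so `n ≥ 3` and paths of length two are counted in `K`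
    have hba : (b : ℕ) ≠ a := Fin.val_ne_of_ne fun h => not_beats_self hP a (h ▸ hab)
    have hbc' : (b : ℕ) ≠ c := Fin.val_ne_of_ne fun h => hac (h ▸ hab)
    have := b.isLt
    exact one_le_zeroTempReach_of_beats_beats (by omega) hab hbc

lemma zeroTempCover_nonneg (c a : Fin n) : 0 ≤ zeroTempCover P c a := by
  refine mul_nonneg (zeroTempEdge_nonneg c a) (sub_nonneg.2 (sup'_le _ _ fun b _ => ?_))
  linarith [zeroTempEdge_le_one (P := P) a b, zeroTempEdge_nonneg (P := P) c b]

lemma one_le_zeroTempCover_of_covers (hδ : 0 < δ) (hm : HasMargin P δ) {c a : Fin n}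
    (h : covers P c a) : 1 ≤ zeroTempCover P c a := by
  obtain ⟨hca, hdom⟩ := h
  have hdiff : ∀ b, zeroTempEdge P a b - zeroTempEdge P c b ≤ 0 := by
    intro b
    by_cases hab : beats P a b
    · rw [zeroTempEdge_of_beats hab, zeroTempEdge_of_beats (hdom b hab), sub_self]
    by_cases hba : a = b
    · subst hba
      rw [zeroTempEdge_of_beats hca]
      linarith [zeroTempEdge_le_one (P := P) a a]
    · rw [zeroTempEdge, heaviside_of_neg (sub_neg.2 (lt_half_of_not_beats hδ hm hba hab))]
      linarith [zeroTempEdge_nonneg (P := P) c b]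
  have hsup : univ.sup' ⟨c, mem_univ c⟩ (fun b => zeroTempEdge P a b - zeroTempEdge P c b) ≤ 0 :=
    sup'_le _ _ fun b _ => hdiff b
  rw [zeroTempCover, zeroTempEdge_of_beats hca, one_mul]
  linarith

lemma one_sub_sup'_zeroTempCover_le_inf'_zeroTempReach (hP : IsProbTournament P) (hδ : 0 < δ)
    (hm : HasMargin P δ) {K : ℕ} (hK : n - 1 ≤ K) {a : Fin n}
    (hs : ({a}ᶜ : Finset (Fin n)).Nonempty) :
    1 - ({a}ᶜ : Finset (Fin n)).sup' hs (zeroTempCover P · a) ≤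
      ({a}ᶜ : Finset (Fin n)).inf' hs (zeroTempReach P K a) := by
  by_cases ha : inUncovered P a
  · calc 1 - ({a}ᶜ : Finset (Fin n)).sup' hs (zeroTempCover P · a) ≤ 1 :=
          sub_le_self _ ((zeroTempCover_nonneg _ a).trans
            (le_sup' (zeroTempCover P · a) hs.choose_spec))
      _ ≤ _ := le_inf' _ _ fun b hb =>
          one_le_zeroTempReach_of_inUncovered hP hδ hm hK ha (by simpa using hb)
  · obtain ⟨c, hca, hc⟩ : ∃ c, c ≠ a ∧ covers P c a := by simpa [inUncovered] using ha
    calc 1 - ({a}ᶜ : Finset (Fin n)).sup' hs (zeroTempCover P · a) ≤ 0 :=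
          sub_nonpos.2 ((one_le_zeroTempCover_of_covers hδ hm hc).trans
            (le_sup' (zeroTempCover P · a) (by simpa using hca)))
      _ ≤ _ := le_inf' _ _ fun b _ => zeroTempReach_nonneg K a b

end Tournament

/-- soft core inclusion in the zero-temperature limit:
`lim_{τ→0⁺} u_τ(a) ≤ lim_{τ→0⁺} t_τ(a)` (both limits exist). -/
theorem soft_core_inclusion {n : ℕ} (hn : 2 ≤ n) (P : Matrix (Fin n) (Fin n) ℝ)
    (δ : ℝ) (hδ : 0 < δ) (hP : IsProbTournament P) (hmargin : HasMargin P δ)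
    (K : ℕ) (hK : n - 1 ≤ K) (a : Fin n) :
    ∃ Lu Lt : ℝ,
      Tendsto (fun τ : ℝ => ucScore P τ a) (𝓝[>] (0:ℝ)) (𝓝 Lu) ∧
      Tendsto (fun τ : ℝ => tcScore P τ K a) (𝓝[>] (0:ℝ)) (𝓝 Lt) ∧
      Lu ≤ Lt := by
  have hs : ({a}ᶜ : Finset (Fin n)).Nonempty := by
    rw [← card_pos, card_compl, card_singleton, Fintype.card_fin]
    omega
  exact ⟨_, _, tendsto_ucScore P hs, tendsto_tcScore P K hs,
    one_sub_sup'_zeroTempCover_le_inf'_zeroTempReach hP hδ hmargin hK hs⟩
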